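/- arXiv:quant-ph/0504203 — 2 statements merged into one kernel-verified Lean document; each statement's English description precedes it below -/
import Mathlib

section
/- For every density matrix σ on ℂ² ⊗ ℂ², with x_{jk} = ⟨φʲ, σ φᵏ⟩, one has Tr((σ ⊗ σ)·L₃⁺) = Σ_{j=1}^{3} (x₀₀·x_{jj} + |x₀ⱼ|²). -/
open Matrix
open scoped Matrix Kronecker ComplexOrder

noncomputable section

/-- Index type of `ℂ² ⊗ ℂ²`. -/
abbrev Q : Type := Fin 2 × Fin 2

/-- The standard basis vector `|ab⟩` of `ℂ² ⊗ ℂ²`. -/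
def ket (a b : Fin 2) : Q → ℂ := fun p => if p = (a, b) then 1 else 0

/-- The Bell basis `φ⁰, φ¹, φ², φ³` of `ℂ² ⊗ ℂ²`. -/
def bell : Fin 4 → Q → ℂ
  | 0 => fun p => (ket 0 0 p + ket 1 1 p) / (Real.sqrt 2 : ℂ)
  | 1 => fun p => Complex.I * (ket 0 1 p + ket 1 0 p) / (Real.sqrt 2 : ℂ)
  | 2 => fun p => (-ket 0 1 p + ket 1 0 p) / (Real.sqrt 2 : ℂ)
  | 3 => fun p => Complex.I * (ket 0 0 p - ket 1 1 p) / (Real.sqrt 2 : ℂ)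

/-- The product basis `e^{jk} = φʲ ⊗ φᵏ` of `(ℂ²⊗ℂ²)⊗(ℂ²⊗ℂ²)`. -/
def e (j k : Fin 4) : Q × Q → ℂ := fun pq => bell j pq.1 * bell k pq.2

/-- Rank-one operator `|v⟩⟨v|`. -/
def outer {m : Type*} (v : m → ℂ) : Matrix m m ℂ := vecMulVec v (star v)

/-- Orthogonal projection onto
`span{e^{jk}+e^{kj} : 1≤j<k≤3} ∪ {e^{11}−e^{22}, e^{22}−e^{33}}`. -/
def K5 : Matrix (Q × Q) (Q × Q) ℂ :=
  (1 / 2 : ℂ) • (outer (e 1 2 + e 2 1) + outer (e 2 3 + e 3 2) + outer (e 3 1 + e 1 3)) +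
    (1 / 2 : ℂ) • outer (e 1 1 - e 2 2) +
    (1 / 6 : ℂ) • outer (e 1 1 + e 2 2 - (2 : ℂ) • e 3 3)

/-- Orthogonal projection onto `span{e^{11}+e^{22}+e^{33}}`. -/
def K1 : Matrix (Q × Q) (Q × Q) ℂ :=
  (1 / 3 : ℂ) • outer (e 1 1 + e 2 2 + e 3 3)

/-- Orthogonal projection onto `span{e^{jk}−e^{kj} : 1≤j<k≤3}`. -/
def K3m : Matrix (Q × Q) (Q × Q) ℂ :=
  (1 / 2 : ℂ) • (outer (e 1 2 - e 2 1) + outer (e 2 3 - e 3 2) + outer (e 3 1 - e 1 3))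

/-- Orthogonal projection onto `span{e^{00}}`. -/
def L1 : Matrix (Q × Q) (Q × Q) ℂ := outer (e 0 0)

/-- Orthogonal projection onto `span{e^{0j}+e^{j0} : j=1,2,3}`. -/
def L3p : Matrix (Q × Q) (Q × Q) ℂ :=
  (1 / 2 : ℂ) • (outer (e 0 1 + e 1 0) + outer (e 0 2 + e 2 0) + outer (e 0 3 + e 3 0))

/-- Orthogonal projection onto `span{e^{0j}−e^{j0} : j=1,2,3}`. -/
def L3m : Matrix (Q × Q) (Q × Q) ℂ :=
  (1 / 2 : ℂ) • (outer (e 0 1 - e 1 0) + outer (e 0 2 - e 2 0) + outer (e 0 3 - e 3 0))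

/-- The matrix elements `x_{jk} = ⟨φʲ, σ φᵏ⟩` of a state `σ` in the Bell basis. -/
def x (σ : Matrix Q Q ℂ) (j k : Fin 4) : ℂ := star (bell j) ⬝ᵥ σ.mulVec (bell k)

/-
`L₃⁺` is half the sum of the rank-one projectors onto `e^{0j} + e^{j0}`, so its trace against
`σ ⊗ σ` is half the sum of the expectations of `σ ⊗ σ` in these vectors. On product vectors
`σ ⊗ σ` factorises, and expanding the symmetrised vector gives
`2 x₀₀ xⱼⱼ + x₀ⱼ xⱼ₀ + xⱼ₀ x₀ⱼ`, where `xⱼ₀ = conj x₀ⱼ` because `σ` is Hermitian.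
-/

open ComplexConjugate

lemma trace_mul_outer {m : Type*} [Fintype m] (A : Matrix m m ℂ) (v : m → ℂ) :
    (A * outer v).trace = star v ⬝ᵥ A *ᵥ v := by
  rw [outer, mul_vecMulVec, trace_vecMulVec, dotProduct_comm]

lemma Matrix.IsHermitian.star_dotProduct_mulVec_comm {n : Type*} [Fintype n]
    {A : Matrix n n ℂ} (hA : A.IsHermitian) (v w : n → ℂ) :
    star w ⬝ᵥ A *ᵥ v = conj (star v ⬝ᵥ A *ᵥ w) := by
  rw [star_dotProduct, star_mulVec, hA.eq, ← dotProduct_mulVec]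
  rfl

lemma star_dotProduct_kronecker_mulVec {m n : Type*} [Fintype m] [Fintype n]
    (A : Matrix m m ℂ) (B : Matrix n n ℂ) (u u' : m → ℂ) (w w' : n → ℂ) :
    star (fun p : m × n => u p.1 * w p.2) ⬝ᵥ (A ⊗ₖ B) *ᵥ (fun p => u' p.1 * w' p.2) =
      (star u ⬝ᵥ A *ᵥ u') * (star w ⬝ᵥ B *ᵥ w') := by
  simp only [dotProduct, mulVec]
  rw [Finset.sum_mul_sum]
  simp only [kroneckerMap_apply, Pi.star_apply, star_mul', Fintype.sum_prod_type, Finset.mul_sum,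
    Finset.sum_mul]
  refine Fintype.sum_congr _ _ fun i => Fintype.sum_congr _ _ fun j => ?_
  rw [Finset.sum_comm]
  exact Fintype.sum_congr _ _ fun k => Fintype.sum_congr _ _ fun l => by ring

lemma star_e_dotProduct_kronecker_mulVec_e (σ : Matrix Q Q ℂ) (j k l m : Fin 4) :
    star (e j k) ⬝ᵥ (σ ⊗ₖ σ) *ᵥ e l m = x σ j l * x σ k m :=
  star_dotProduct_kronecker_mulVec σ σ _ _ _ _

lemma star_dotProduct_kronecker_mulVec_e_add_e (σ : Matrix Q Q ℂ) (hσ : σ.IsHermitian)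
    (j k : Fin 4) :
    star (e j k + e k j) ⬝ᵥ (σ ⊗ₖ σ) *ᵥ (e j k + e k j) =
      2 * (x σ j j * x σ k k) + 2 * (‖x σ j k‖ : ℂ) ^ 2 := by
  have hx : x σ k j = conj (x σ j k) := hσ.star_dotProduct_mulVec_comm _ _
  simp only [star_add, add_dotProduct, mulVec_add, dotProduct_add,
    star_e_dotProduct_kronecker_mulVec_e, hx, Complex.mul_conj']
  rw [mul_comm (conj _), Complex.mul_conj']
  ring

theorem stmt10_general (σ : Matrix Q Q ℂ) (hσ : σ.PosSemidef) :
    ((σ ⊗ₖ σ) * L3p).trace =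
      (x σ 0 0 * x σ 1 1 + ((‖x σ 0 1‖ : ℂ)) ^ 2) +
      (x σ 0 0 * x σ 2 2 + ((‖x σ 0 2‖ : ℂ)) ^ 2) +
      (x σ 0 0 * x σ 3 3 + ((‖x σ 0 3‖ : ℂ)) ^ 2) := by
  simp only [L3p, Matrix.mul_smul, Matrix.mul_add, trace_smul, trace_add, trace_mul_outer,
    star_dotProduct_kronecker_mulVec_e_add_e σ hσ.isHermitian, smul_eq_mul]
  ring

/-- `Tr((σ⊗σ) L₃⁺) = Σ_{j=1}^3 (x₀₀ x_{jj} + |x₀ⱼ|²)`. -/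
theorem stmt10 (σ : Matrix Q Q ℂ) (hσ : σ.PosSemidef) (htr : σ.trace = 1) :
    ((σ ⊗ₖ σ) * L3p).trace =
      (x σ 0 0 * x σ 1 1 + ((‖x σ 0 1‖ : ℂ)) ^ 2) +
      (x σ 0 0 * x σ 2 2 + ((‖x σ 0 2‖ : ℂ)) ^ 2) +
      (x σ 0 0 * x σ 3 3 + ((‖x σ 0 3‖ : ℂ)) ^ 2) :=
  stmt10_general σ hσ
end
end

section
/- Let w₁, …, w₅ be real numbers and T₁ = w₁·K₅⁺ + w₂·L₃⁺ + w₃·K₁⁺ + w₄·K₃⁻ + w₅·L₃⁻. If the partial transpose of I − T₁ over the single factor B₂ is positive semidefinite, then (3/4)·(w₂ + w₅) ≤ 1. -/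
open Matrix
open scoped Matrix Kronecker ComplexOrder

noncomputable section

-- An element of `Q × Q = (A₁ × B₁) × (A₂ × B₂)` is the quadruple of indices
-- `((a₁,b₁),(a₂,b₂))` of `(ℂ²)^{⊗4} = A₁ ⊗ B₁ ⊗ A₂ ⊗ B₂`;
-- the first sample is `A₁ ⊗ B₁` and the second sample is `A₂ ⊗ B₂`.

/-- Partial transpose over the second sample `A₂ ⊗ B₂`. -/
def ptSecond (X : Matrix (Q × Q) (Q × Q) ℂ) : Matrix (Q × Q) (Q × Q) ℂ :=
  Matrix.of fun r c => X (r.1, c.2) (c.1, r.2)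

/-- Partial transpose over the factors `B₁ ⊗ B₂`. -/
def ptB (X : Matrix (Q × Q) (Q × Q) ℂ) : Matrix (Q × Q) (Q × Q) ℂ :=
  Matrix.of fun r c =>
    X ((r.1.1, c.1.2), (r.2.1, c.2.2)) ((c.1.1, r.1.2), (c.2.1, r.2.2))

/-- Partial transpose over the single factor `B₂`. -/
def ptB2 (X : Matrix (Q × Q) (Q × Q) ℂ) : Matrix (Q × Q) (Q × Q) ℂ :=
  Matrix.of fun r c => X (r.1, (r.2.1, c.2.2)) (c.1, (c.2.1, r.2.2))

/-! Test the positivity hypothesis on `e^{02} = φ⁰ ⊗ φ²`, a Bell state on the first sample times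
the singlet on the second. The partial transpose is self-adjoint for the trace pairing, and the
partial transpose of the singlet projector `P₂` is `(1 − 2P₀)/2 = (P₁ + P₂ + P₃ − P₀)/2`, where
`Pₖ = |φᵏ⟩⟨φᵏ|`. Hence
`⟨e^{02}, pt_{B₂}(X) e^{02}⟩ = (⟨X⟩₀₁ + ⟨X⟩₀₂ + ⟨X⟩₀₃ − ⟨X⟩₀₀)/2` with `⟨X⟩ⱼₖ = ⟨e^{jk}, X e^{jk}⟩`.
The `K`-projectors vanish on every `e^{0k}`, while `L₃⁺` and `L₃⁻` have expectation `1/2` at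
`e^{0k}` for `k ≠ 0` and `0` at `e^{00}`; for `X = I − T₁` this gives `1 − (3/4)(w₂ + w₅) ≥ 0`. -/

theorem Matrix.kronecker_sub {l m n p α : Type*} [NonUnitalNonAssocRing α] (A : Matrix l m α)
    (B₁ B₂ : Matrix n p α) : A ⊗ₖ (B₁ - B₂) = A ⊗ₖ B₁ - A ⊗ₖ B₂ := by
  ext; simp [mul_sub]

lemma star_dotProduct_mulVec_eq_trace_mul_outer {m : Type*} [Fintype m] (M : Matrix m m ℂ)
    (u : m → ℂ) : star u ⬝ᵥ M *ᵥ u = trace (M * outer u) := by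
  simp only [trace, diag, mul_apply, outer, vecMulVec_apply, dotProduct, mulVec, Finset.mul_sum]
  refine Finset.sum_congr rfl fun i _ => Finset.sum_congr rfl fun j _ => ?_
  simp only [Pi.star_apply]
  ring

lemma star_dotProduct_outer_mulVec {m : Type*} [Fintype m] (u v w : m → ℂ) :
    star u ⬝ᵥ outer v *ᵥ w = (star u ⬝ᵥ v) * (star v ⬝ᵥ w) := by
  rw [outer, vecMulVec_mulVec, op_smul_eq_smul, dotProduct_smul, smul_eq_mul, mul_comm]

def ptRight {m n R : Type*} (Y : Matrix (m × n) (m × n) R) : Matrix (m × n) (m × n) R :=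
  of fun r c => Y (r.1, c.2) (c.1, r.2)

lemma ptB2_kronecker (A B : Matrix Q Q ℂ) : ptB2 (A ⊗ₖ B) = A ⊗ₖ ptRight B := rfl

lemma trace_ptB2_mul (X Y : Matrix (Q × Q) (Q × Q) ℂ) :
    trace (ptB2 X * Y) = trace (X * ptB2 Y) := by
  simp only [trace, diag, mul_apply, ptB2, of_apply, ← Finset.sum_product']
  let swapB2 : (Q × Q) × (Q × Q) → (Q × Q) × (Q × Q) :=
    fun p => ((p.1.1, (p.1.2.1, p.2.2.2)), (p.2.1, (p.2.2.1, p.1.2.2)))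
  have hswap : Function.Involutive swapB2 := fun _ => rfl
  exact Fintype.sum_equiv hswap.toPerm _ _ fun _ => rfl

lemma ofReal_sqrt_two_inv_sq : ((Real.sqrt 2 : ℝ) : ℂ)⁻¹ ^ 2 = 2⁻¹ := by
  rw [inv_pow, ← Complex.ofReal_pow, Real.sq_sqrt zero_le_two]
  norm_num

lemma bell_orthonormal (j k : Fin 4) :
    star (bell j) ⬝ᵥ bell k = if j = k then 1 else 0 := by
  fin_cases j <;> fin_cases k <;>
    simp [bell, ket, dotProduct, Fintype.sum_prod_type, Prod.ext_iff, div_eq_mul_inv] <;>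
    ring_nf <;> simp only [ofReal_sqrt_two_inv_sq] <;> norm_num

lemma e_orthonormal (j k l m : Fin 4) :
    star (e j k) ⬝ᵥ e l m = if j = l ∧ k = m then 1 else 0 := by
  have hsplit :
      star (e j k) ⬝ᵥ e l m = (star (bell j) ⬝ᵥ bell l) * (star (bell k) ⬝ᵥ bell m) := by
    rw [dotProduct, Fintype.sum_prod_type, dotProduct, dotProduct, Finset.sum_mul_sum]
    refine Finset.sum_congr rfl fun _ _ => Finset.sum_congr rfl fun _ _ => ?_
    simp only [e, Pi.star_apply, star_mul']
    ring
  rw [hsplit, bell_orthonormal, bell_orthonormal, ite_zero_mul_ite_zero, one_mul]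

lemma outer_e (j k : Fin 4) : outer (e j k) = outer (bell j) ⊗ₖ outer (bell k) := by
  ext r c
  simp only [outer, e, vecMulVec_apply, kroneckerMap_apply, Pi.star_apply, star_mul']
  ring

lemma ptRight_outer_bell_two :
    ptRight (outer (bell 2)) =
      (1 / 2 : ℂ) • (outer (bell 1) + outer (bell 2) + outer (bell 3) - outer (bell 0)) := by
  ext ⟨a, b⟩ ⟨c, d⟩
  fin_cases a <;> fin_cases b <;> fin_cases c <;> fin_cases d <;>
    simp [ptRight, outer, bell, ket, vecMulVec_apply, div_eq_mul_inv] <;>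
    ring_nf <;> simp only [ofReal_sqrt_two_inv_sq] <;> norm_num

lemma ptB2_outer_e_zero_two :
    ptB2 (outer (e 0 2)) =
      (1 / 2 : ℂ) • (outer (e 0 1) + outer (e 0 2) + outer (e 0 3) - outer (e 0 0)) := by
  rw [outer_e, ptB2_kronecker, ptRight_outer_bell_two, kronecker_smul, kronecker_sub,
    kronecker_add, kronecker_add]
  simp only [outer_e]

def bellExpect (j k : Fin 4) : Matrix (Q × Q) (Q × Q) ℂ →ₗ[ℂ] ℂ where
  toFun X := star (e j k) ⬝ᵥ X *ᵥ e j k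
  map_add' X Y := by rw [add_mulVec, dotProduct_add]
  map_smul' c X := by rw [smul_mulVec, dotProduct_smul]; rfl

lemma bellExpect_one (j k : Fin 4) : bellExpect j k 1 = 1 := by
  simp [bellExpect, e_orthonormal]

lemma bellExpect_outer (j k : Fin 4) (v : Q × Q → ℂ) :
    bellExpect j k (outer v) = (star (e j k) ⬝ᵥ v) * (star v ⬝ᵥ e j k) :=
  star_dotProduct_outer_mulVec (e j k) v (e j k)

lemma bellExpect_zero_two_ptB2 (X : Matrix (Q × Q) (Q × Q) ℂ) :
    bellExpect 0 2 (ptB2 X) =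
      (bellExpect 0 1 X + bellExpect 0 2 X + bellExpect 0 3 X - bellExpect 0 0 X) / 2 := by
  simp only [bellExpect, LinearMap.coe_mk, AddHom.coe_mk,
    star_dotProduct_mulVec_eq_trace_mul_outer, trace_ptB2_mul, ptB2_outer_e_zero_two, Matrix.mul_smul, Matrix.mul_add, Matrix.mul_sub,
    trace_smul, trace_add, trace_sub, smul_eq_mul]
  ring

section

variable (k : Fin 4)

lemma bellExpect_K5 : bellExpect 0 k K5 = 0 := by
  fin_cases k <;>
    simp [K5, bellExpect_outer, e_orthonormal,
      star_add, star_sub, add_dotProduct, sub_dotProduct]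

lemma bellExpect_K1 : bellExpect 0 k K1 = 0 := by
  fin_cases k <;>
    simp [K1, bellExpect_outer, e_orthonormal, star_add, add_dotProduct]

lemma bellExpect_K3m : bellExpect 0 k K3m = 0 := by
  fin_cases k <;>
    simp [K3m, bellExpect_outer, e_orthonormal, star_sub, sub_dotProduct]

lemma bellExpect_L3p : bellExpect 0 k L3p = if k = 0 then 0 else 1 / 2 := by
  fin_cases k <;>
    simp [L3p, bellExpect_outer, e_orthonormal, star_add, add_dotProduct]

lemma bellExpect_L3m : bellExpect 0 k L3m = if k = 0 then 0 else 1 / 2 := by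
  fin_cases k <;>
    simp [L3m, bellExpect_outer, e_orthonormal, star_sub, sub_dotProduct]

end

/-- If the partial transpose over the single factor `B₂` of `I − T₁`, where
`T₁ = w₁K₅⁺ + w₂L₃⁺ + w₃K₁⁺ + w₄K₃⁻ + w₅L₃⁻`, is positive semidefinite, then
`(3/4)(w₂ + w₅) ≤ 1`. -/
theorem stmt19 (w1 w2 w3 w4 w5 : ℝ)
    (T1 : Matrix (Q × Q) (Q × Q) ℂ)
    (hT1 : T1 = (w1 : ℂ) • K5 + (w2 : ℂ) • L3p + (w3 : ℂ) • K1 +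
      (w4 : ℂ) • K3m + (w5 : ℂ) • L3m)
    (hpt : (ptB2 (1 - T1)).PosSemidef) :
    (3 / 4 : ℝ) * (w2 + w5) ≤ 1 := by
  have hvalue : bellExpect 0 2 (ptB2 (1 - T1)) = ((1 - 3 / 4 * (w2 + w5) : ℝ) : ℂ) := by
    simp only [bellExpect_zero_two_ptB2, hT1, map_sub, map_add, map_smul, bellExpect_one,
      bellExpect_K5, bellExpect_K1, bellExpect_K3m, bellExpect_L3p, bellExpect_L3m]
    push_cast
    norm_num
    ring
  have hnonneg : 0 ≤ bellExpect 0 2 (ptB2 (1 - T1)) := hpt.dotProduct_mulVec_nonneg (e 0 2)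
  rw [hvalue, Complex.zero_le_real] at hnonneg
  linarith
end
end
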